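/- Characterization of mutual/common knowledge of a fact (telling setting): For any word w over N whose set of letters [w] has at least two distinct players, any atom p ∈ At, and any state (V,M), the following are equivalent: (i) (V,M) ⊨ K_w p (iterated knowledge along w); (ii) some message (·,A,p) ∈ M satisfies [w] ⊆ A; (iii) (V,M) ⊨ C_{[w]} p. -/

import Mathlib

structure Msg (P A : Type) where
  sender : P
  grp : Set P
  fact : A

inductive Form (P A : Type) where
  | atom : A → Form P A
  | neg  : Form P A → Form P A
  | and  : Form P A → Form P A → Form P A
  | or   : Form P A → Form P A → Form P A
  | ck   : Set P → Form P A → Form P A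

/-- The negation-free (positive) fragment L⁺. -/
def Positive {P A : Type} : Form P A → Prop
  | .atom _ => True
  | .neg _ => False
  | .and φ ψ => Positive φ ∧ Positive ψ
  | .or φ ψ => Positive φ ∧ Positive ψ
  | .ck _ φ => Positive φ

/-- Atoms occurring in a formula. -/
def FactsF {P A : Type} : Form P A → Set A
  | .atom p => {p}
  | .neg φ => FactsF φ
  | .and φ ψ => FactsF φ ∪ FactsF ψ
  | .or φ ψ => FactsF φ ∪ FactsF ψ
  | .ck _ φ => FactsF φ

/-- Facts occurring in a set of messages. -/
def Facts {P A : Type} (M : Set (Msg P A)) : Set A := {p | ∃ m ∈ M, m.fact = p}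

/-- A state in the telling setting: messages (i,A,p) with i ∈ A, p ∈ At_i
    (ownership given by `owner`), and Facts(M) ⊆ V. -/
def TState {P A : Type} (owner : A → P) (V : Set A) (M : Set (Msg P A)) : Prop :=
  ∀ m ∈ M, m.sender ∈ m.grp ∧ owner m.fact = m.sender ∧ m.fact ∈ V

/-- All messages are H-compliant. -/
def HComp {P A : Type} (H : Set (Set P)) (M : Set (Msg P A)) : Prop :=
  ∀ m ∈ M, m.grp ∈ H

/-- Indistinguishability for player i: equality of (V_i, M_i). -/
def indist {P A : Type} (owner : A → P) (i : P)
    (s t : Set A × Set (Msg P A)) : Prop :=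
  {p ∈ s.1 | owner p = i} = {p ∈ t.1 | owner p = i} ∧
  {m ∈ s.2 | i ∈ m.grp} = {m ∈ t.2 | i ∈ m.grp}

/-- ∼_G: transitive closure of the union of the ∼_i, i ∈ G. -/
def reach {P A : Type} (owner : A → P) (G : Set P) :
    Set A × Set (Msg P A) → Set A × Set (Msg P A) → Prop :=
  Relation.TransGen (fun s t => ∃ i ∈ G, indist owner i s t)

/-- Semantics ⊨_H (telling setting): C_G quantifies over H-compliant telling states. -/
def sat {P A : Type} (owner : A → P) (H : Set (Set P)) :
    Form P A → Set A → Set (Msg P A) → Prop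
  | .atom p, V, _ => p ∈ V
  | .neg φ, V, M => ¬ sat owner H φ V M
  | .and φ ψ, V, M => sat owner H φ V M ∧ sat owner H ψ V M
  | .or φ ψ, V, M => sat owner H φ V M ∨ sat owner H ψ V M
  | .ck G φ, V, M => ∀ V' M', TState owner V' M' → HComp H M' →
      reach owner G (V, M) (V', M') → sat owner H φ V' M'

/-- The complete hypergraph: all nonempty subsets of players. -/
def completeH (P : Type) : Set (Set P) := {B | B.Nonempty}

/-- Iterated knowledge K_{i₁}…K_{i_k} φ along a word. -/
def Kw {P A : Type} (w : List P) (φ : Form P A) : Form P A :=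
  w.foldr (fun i ψ => Form.ck {i} ψ) φ


/-!
Restricting a state to what player `i` sees (its own atoms, the messages it is in, and their
facts) gives an `∼ᵢ`-equivalent telling state, and iterating this along `w` gives a state
`∼_{[w]}`-reachable from the original one, so both `K_w p` and `C_{[w]} p` force `p` to survive
the iterated restriction. It survives only if every letter of `w` owns `p` or a single message
about `p` reaches all of `[w]` (the owner of a told fact is its sender, hence in its group);
with two distinct letters the first option is impossible. Conversely a message whose group
contains `[w]` is preserved by every `∼_{[w]}`-step, and it carries `p` into the valuation.
-/

section Telling

variable {P A : Type} {owner : A → P}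

/-- The minimal state that player `i` cannot distinguish from `s`. -/
def restrictTo (owner : A → P) (i : P) (s : Set A × Set (Msg P A)) :
    Set A × Set (Msg P A) :=
  ({q ∈ s.1 | owner q = i} ∪ Facts {m ∈ s.2 | i ∈ m.grp}, {m ∈ s.2 | i ∈ m.grp})

def restrictAlong (owner : A → P) : List P → Set A × Set (Msg P A) → Set A × Set (Msg P A)
  | [], s => s
  | i :: l, s => restrictAlong owner l (restrictTo owner i s)

lemma TState.hComp_completeH {V : Set A} {M : Set (Msg P A)} (h : TState owner V M) :
    HComp (completeH P) M :=
  fun m hm => ⟨m.sender, (h m hm).1⟩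

lemma TState.mem_grp_of_owner {V : Set A} {M : Set (Msg P A)} (h : TState owner V M)
    {m : Msg P A} (hm : m ∈ M) {k : P} (hk : owner m.fact = k) : k ∈ m.grp :=
  hk ▸ (h m hm).2.1 ▸ (h m hm).1

lemma TState.fact_mem {V : Set A} {M : Set (Msg P A)} (h : TState owner V M)
    {m : Msg P A} (hm : m ∈ M) : m.fact ∈ V :=
  (h m hm).2.2

lemma TState.restrictTo {s : Set A × Set (Msg P A)} (h : TState owner s.1 s.2) (i : P) :
    TState owner (restrictTo owner i s).1 (restrictTo owner i s).2 := by
  rintro m ⟨hm, hi⟩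
  exact ⟨(h m hm).1, (h m hm).2.1, Or.inr ⟨m, ⟨hm, hi⟩, rfl⟩⟩

lemma TState.restrictAlong :
    ∀ (l : List P) {s : Set A × Set (Msg P A)}, TState owner s.1 s.2 →
      TState owner (restrictAlong owner l s).1 (restrictAlong owner l s).2
  | [], _, h => h
  | i :: l, _, h => (h.restrictTo i).restrictAlong l

lemma mem_restrictTo_fst {s : Set A × Set (Msg P A)} (h : TState owner s.1 s.2)
    {i : P} {p : A} :
    p ∈ (restrictTo owner i s).1 ↔
      p ∈ s.1 ∧ (owner p = i ∨ ∃ m ∈ s.2, i ∈ m.grp ∧ m.fact = p) := by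
  constructor
  · rintro (⟨hp, ho⟩ | ⟨m, ⟨hm, hi⟩, rfl⟩)
    · exact ⟨hp, Or.inl ho⟩
    · exact ⟨h.fact_mem hm, Or.inr ⟨m, hm, hi, rfl⟩⟩
  · rintro ⟨hp, ho | ⟨m, hm, hi, rfl⟩⟩
    · exact Or.inl ⟨hp, ho⟩
    · exact Or.inr ⟨m, ⟨hm, hi⟩, rfl⟩

lemma indist_restrictTo {s : Set A × Set (Msg P A)} (h : TState owner s.1 s.2) (i : P) :
    indist owner i s (restrictTo owner i s) := by
  refine ⟨?_, ?_⟩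
  · ext q
    simp only [Set.mem_ofPred_eq, mem_restrictTo_fst h]
    constructor
    · rintro ⟨hq, ho⟩
      exact ⟨⟨hq, Or.inl ho⟩, ho⟩
    · rintro ⟨⟨hq, -⟩, ho⟩
      exact ⟨hq, ho⟩
  · ext m
    simp only [restrictTo, Set.mem_ofPred_eq]
    tauto

lemma reflTransGen_restrictAlong {G : Set P} :
    ∀ (l : List P) {s : Set A × Set (Msg P A)}, (∀ i ∈ l, i ∈ G) → TState owner s.1 s.2 →
      Relation.ReflTransGen (fun s t => ∃ i ∈ G, indist owner i s t) s
        (restrictAlong owner l s)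
  | [], _, _, _ => .refl
  | i :: l, _, hG, h =>
      .head ⟨i, hG i List.mem_cons_self, indist_restrictTo h i⟩
        (reflTransGen_restrictAlong l (fun k hk => hG k (List.mem_cons_of_mem i hk))
          (h.restrictTo i))

lemma reach_restrictAlong {G : Set P} {l : List P} (hl : l ≠ []) (hG : ∀ i ∈ l, i ∈ G)
    {s : Set A × Set (Msg P A)} (h : TState owner s.1 s.2) :
    reach owner G s (restrictAlong owner l s) := by
  obtain ⟨i, l, rfl⟩ := List.exists_cons_of_ne_nil hl
  exact .head' ⟨i, hG i List.mem_cons_self, indist_restrictTo h i⟩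
    (reflTransGen_restrictAlong l (fun k hk => hG k (List.mem_cons_of_mem i hk))
      (h.restrictTo i))

lemma mem_restrictAlong_fst :
    ∀ (l : List P) {s : Set A × Set (Msg P A)}, TState owner s.1 s.2 → ∀ {p : A},
      p ∈ (restrictAlong owner l s).1 →
      p ∈ s.1 ∧ ((∀ i ∈ l, owner p = i) ∨ ∃ m ∈ s.2, (∀ i ∈ l, i ∈ m.grp) ∧ m.fact = p)
  | [], _, _, _, hp => ⟨hp, Or.inl fun _ h => absurd h List.not_mem_nil⟩
  | i :: l, s, h, p, hp => by
    obtain ⟨hpi, hl⟩ := mem_restrictAlong_fst l (h.restrictTo i) hp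
    obtain ⟨hps, hi⟩ := (mem_restrictTo_fst h).1 hpi
    refine ⟨hps, ?_⟩
    rcases hl with hown | ⟨m, ⟨hm, hmi⟩, hml, rfl⟩
    · rcases hi with hoi | ⟨m, hm, hmi, rfl⟩
      · exact Or.inl (List.forall_mem_cons.2 ⟨hoi, hown⟩)
      · exact Or.inr ⟨m, hm, List.forall_mem_cons.2
          ⟨hmi, fun k hk => h.mem_grp_of_owner hm (hown k hk)⟩, rfl⟩
    · exact Or.inr ⟨m, hm, List.forall_mem_cons.2 ⟨hmi, hml⟩, rfl⟩

lemma exists_msg_of_mem_restrictAlong {V : Set A} {M : Set (Msg P A)}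
    (h : TState owner V M) {l : List P} (hl : ∃ i ∈ l, ∃ j ∈ l, i ≠ j) {p : A}
    (hp : p ∈ (restrictAlong owner l (V, M)).1) :
    ∃ m ∈ M, (∀ i ∈ l, i ∈ m.grp) ∧ m.fact = p := by
  obtain ⟨i, hi, j, hj, hij⟩ := hl
  rcases (mem_restrictAlong_fst l h hp).2 with hown | hmsg
  · exact absurd ((hown i hi).symm.trans (hown j hj)) hij
  · exact hmsg

lemma mem_snd_of_indist {i : P} {s t : Set A × Set (Msg P A)} (hst : indist owner i s t)
    {m : Msg P A} (hm : m ∈ s.2) (hi : i ∈ m.grp) : m ∈ t.2 := by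
  have : m ∈ {m ∈ t.2 | i ∈ m.grp} := hst.2 ▸ ⟨hm, hi⟩
  exact this.1

lemma mem_snd_of_reach {G : Set P} {s t : Set A × Set (Msg P A)} (hst : reach owner G s t)
    {m : Msg P A} (hm : m ∈ s.2) (hG : G ⊆ m.grp) : m ∈ t.2 := by
  induction hst with
  | single hst =>
    obtain ⟨i, hi, hst⟩ := hst
    exact mem_snd_of_indist hst hm (hG hi)
  | tail _ hst ih =>
    obtain ⟨i, hi, hst⟩ := hst
    exact mem_snd_of_indist hst ih (hG hi)

lemma sat_Kw_of_exists_msg {H : Set (Set P)} {p : A} :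
    ∀ (l : List P) {V : Set A} {M : Set (Msg P A)}, TState owner V M →
      (∃ m ∈ M, (∀ i ∈ l, i ∈ m.grp) ∧ m.fact = p) →
      sat owner H (Kw l (.atom p)) V M
  | [], _, _, h, ⟨_, hm, _, hp⟩ => hp ▸ h.fact_mem hm
  | i :: l, _, _, _, ⟨m, hm, hl, hp⟩ => fun _ _ h' _ hr =>
      sat_Kw_of_exists_msg l h'
        ⟨m, mem_snd_of_reach hr hm (Set.singleton_subset_iff.2 (hl i List.mem_cons_self)),
          fun k hk => hl k (List.mem_cons_of_mem i hk), hp⟩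

lemma sat_ck_of_exists_msg {H : Set (Set P)} {G : Set P} {V : Set A} {M : Set (Msg P A)}
    {p : A} (hm : ∃ m ∈ M, G ⊆ m.grp ∧ m.fact = p) : sat owner H (.ck G (.atom p)) V M := by
  obtain ⟨m, hm, hG, rfl⟩ := hm
  exact fun _ _ h' _ hr => h'.fact_mem (mem_snd_of_reach hr hm hG)

lemma mem_restrictAlong_of_sat_Kw {p : A} :
    ∀ (l : List P) {V : Set A} {M : Set (Msg P A)}, TState owner V M →
      sat owner (completeH P) (Kw l (.atom p)) V M → p ∈ (restrictAlong owner l (V, M)).1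
  | [], _, _, _, hp => hp
  | i :: l, _, _, h, hp =>
      mem_restrictAlong_of_sat_Kw l (h.restrictTo i)
        (hp _ _ (h.restrictTo i) (h.restrictTo i).hComp_completeH
          (.single ⟨i, rfl, indist_restrictTo h i⟩))

lemma mem_restrictAlong_of_sat_ck {l : List P} (hl : l ≠ []) {V : Set A}
    {M : Set (Msg P A)} (h : TState owner V M) {p : A}
    (hp : sat owner (completeH P) (.ck {x | x ∈ l} (.atom p)) V M) :
    p ∈ (restrictAlong owner l (V, M)).1 :=
  hp _ _ (h.restrictAlong l) (h.restrictAlong l).hComp_completeH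
    (reach_restrictAlong hl (fun _ hk => hk) h)

end Telling

theorem chain_fact_iff_msg_iff_ck_general {P A : Type} (owner : A → P)
    (V : Set A) (M : Set (Msg P A)) (hS : TState owner V M)
    (w : List P) (hw : ∃ i ∈ w, ∃ j ∈ w, i ≠ j) (p : A) :
    (sat owner (completeH P) (Kw w (.atom p)) V M ↔
        ∃ m ∈ M, {x | x ∈ w} ⊆ m.grp ∧ m.fact = p) ∧
    ((∃ m ∈ M, {x | x ∈ w} ⊆ m.grp ∧ m.fact = p) ↔
        sat owner (completeH P) (.ck {x | x ∈ w} (.atom p)) V M) := by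
  have hne : w ≠ [] := by
    rintro rfl
    simp at hw
  refine ⟨⟨fun hK => ?_, sat_Kw_of_exists_msg w hS⟩, ⟨sat_ck_of_exists_msg, fun hC => ?_⟩⟩
  · exact exists_msg_of_mem_restrictAlong hS hw (mem_restrictAlong_of_sat_Kw w hS hK)
  · exact exists_msg_of_mem_restrictAlong hS hw (mem_restrictAlong_of_sat_ck hne hS hC)

theorem chain_fact_iff_msg_iff_ck {P A : Type} [Fintype P] (owner : A → P)
    (V : Set A) (M : Set (Msg P A)) (hS : TState owner V M)
    (w : List P) (hw : ∃ i ∈ w, ∃ j ∈ w, i ≠ j) (p : A) :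
    (sat owner (completeH P) (Kw w (.atom p)) V M ↔
        ∃ m ∈ M, {x | x ∈ w} ⊆ m.grp ∧ m.fact = p) ∧
    ((∃ m ∈ M, {x | x ∈ w} ⊆ m.grp ∧ m.fact = p) ↔
        sat owner (completeH P) (.ck {x | x ∈ w} (.atom p)) V M) :=
  chain_fact_iff_msg_iff_ck_general owner V M hS w hw p
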